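/- arXiv:1612.07718 — 4 statements merged into one kernel-verified Lean document; each statement's English description precedes it below -/
import Mathlib

section
/- (Bell's inequality, classical-probability form) Let (Ω, F, P) be a probability space and let A₁, A₂, B₁, B₂ ∈ F be events. Define the coincidence event f(A,B) := (A ∩ B) ∪ (Aᶜ ∩ Bᶜ), where Aᶜ denotes the complement of A in Ω. Then P(f(A₁,B₁)) ≤ P(f(A₁,B₂)) + P(f(A₂,B₂)) + P(f(A₂,B₁)). -/
open MeasureTheory

namespace Set

variable {α : Type*}

def coincidence (A B : Set α) : Set α := (A ∩ B) ∪ (Aᶜ ∩ Bᶜ)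

/- Disagreement is additive mod 2 along the chain `A₁, B₂, A₂, B₁`: if the three links all
disagree, so do the endpoints. -/
theorem coincidence_subset_union (A₁ A₂ B₁ B₂ : Set α) :
    coincidence A₁ B₁ ⊆ coincidence A₁ B₂ ∪ coincidence A₂ B₂ ∪ coincidence A₂ B₁ := by
  intro ω
  simp only [coincidence, mem_union, mem_inter_iff, mem_compl_iff]
  tauto

end Set

theorem MeasureTheory.measure_coincidence_le {α F : Type*} [FunLike F (Set α) ENNReal]
    [OuterMeasureClass F α] (μ : F) (A₁ A₂ B₁ B₂ : Set α) :
    μ (Set.coincidence A₁ B₁) ≤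
      μ (Set.coincidence A₁ B₂) + μ (Set.coincidence A₂ B₂) + μ (Set.coincidence A₂ B₁) :=
  calc μ (Set.coincidence A₁ B₁)
      ≤ μ (Set.coincidence A₁ B₂ ∪ Set.coincidence A₂ B₂ ∪ Set.coincidence A₂ B₁) :=
        measure_mono (Set.coincidence_subset_union A₁ A₂ B₁ B₂)
    _ ≤ μ (Set.coincidence A₁ B₂ ∪ Set.coincidence A₂ B₂) + μ (Set.coincidence A₂ B₁) :=
        measure_union_le _ _
    _ ≤ _ := add_le_add_left (measure_union_le _ _) _

theorem bell_inequality_general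
    {Ω : Type*} [MeasurableSpace Ω] (P : Measure Ω)
    (A₁ A₂ B₁ B₂ : Set Ω) :
    P ((A₁ ∩ B₁) ∪ (A₁ᶜ ∩ B₁ᶜ)) ≤
      P ((A₁ ∩ B₂) ∪ (A₁ᶜ ∩ B₂ᶜ)) + P ((A₂ ∩ B₂) ∪ (A₂ᶜ ∩ B₂ᶜ)) +
        P ((A₂ ∩ B₁) ∪ (A₂ᶜ ∩ B₁ᶜ)) :=
  measure_coincidence_le P A₁ A₂ B₁ B₂

/-- Bell's inequality in classical probability: with coincidence events
`f(A,B) = (A ∩ B) ∪ (Aᶜ ∩ Bᶜ)`, one has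
`P(f(A₁,B₁)) ≤ P(f(A₁,B₂)) + P(f(A₂,B₂)) + P(f(A₂,B₁))`. -/
theorem bell_inequality
    {Ω : Type*} [MeasurableSpace Ω] (P : Measure Ω) [IsProbabilityMeasure P]
    (A₁ A₂ B₁ B₂ : Set Ω)
    (hA₁ : MeasurableSet A₁) (hA₂ : MeasurableSet A₂)
    (hB₁ : MeasurableSet B₁) (hB₂ : MeasurableSet B₂) :
    P ((A₁ ∩ B₁) ∪ (A₁ᶜ ∩ B₁ᶜ)) ≤
      P ((A₁ ∩ B₂) ∪ (A₁ᶜ ∩ B₂ᶜ)) + P ((A₂ ∩ B₂) ∪ (A₂ᶜ ∩ B₂ᶜ)) +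
        P ((A₂ ∩ B₁) ∪ (A₂ᶜ ∩ B₁ᶜ)) :=
  bell_inequality_general P A₁ A₂ B₁ B₂
end

section
/- (Quantum violation of CHSH) Let σ₁, σ₂, σ₃ be the Pauli matrices, E(a) := a₁σ₁ + a₂σ₂ + a₃σ₃ for a ∈ ℝ³, and ψ := (1/√2)(e₀ ⊗ e₁ − e₁ ⊗ e₀) ∈ ℂ² ⊗ ℂ². Then (i) for all unit vectors a, b ∈ ℝ³, ⟨ψ, (E(a) ⊗ E(b)) ψ⟩ = −(a·b); and (ii) there exist unit vectors a, a', b, b' ∈ ℝ³ such that |⟨ψ, (E(a) ⊗ (E(b)+E(b')) + E(a') ⊗ (E(b)−E(b'))) ψ⟩| = |a·b + a·b' + a'·b − a'·b'| > 2. -/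
/-!
For any `A, B`, the singlet expectation `⟨ψ, (A ⊗ B) ψ⟩` is
`(A₀₀B₁₁ − A₀₁B₁₀ − A₁₀B₀₁ + A₁₁B₀₀)/2`; for `E(a) = [[a₃, a₁ − i a₂], [a₁ + i a₂, −a₃]]`
and `E(b)` this is `−a·b`. Since `E` is linear, the CHSH expectation is minus the CHSH
combination of the dot products, and coplanar unit vectors at 45° make it `2√2 > 2`.
-/

open Matrix Kronecker

noncomputable section

def pauli1 : Matrix (Fin 2) (Fin 2) ℂ := !![0, 1; 1, 0]
def pauli2 : Matrix (Fin 2) (Fin 2) ℂ := !![0, -Complex.I; Complex.I, 0]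
def pauli3 : Matrix (Fin 2) (Fin 2) ℂ := !![1, 0; 0, -1]

/-- `E(a) = a₁σ₁ + a₂σ₂ + a₃σ₃` for `a ∈ ℝ³`. -/
def spinE (a₁ a₂ a₃ : ℝ) : Matrix (Fin 2) (Fin 2) ℂ :=
  (a₁ : ℂ) • pauli1 + (a₂ : ℂ) • pauli2 + (a₃ : ℂ) • pauli3

/-- The singlet state `ψ = (1/√2)(e₀ ⊗ e₁ − e₁ ⊗ e₀)`. -/
def psiSinglet : Fin 2 × Fin 2 → ℂ := fun p =>
  if p = (0, 1) then ((1 / Real.sqrt 2 : ℝ) : ℂ)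
  else if p = (1, 0) then (-(1 / Real.sqrt 2 : ℝ) : ℂ)
  else 0

theorem inv_sqrt_two_sq : ((Real.sqrt 2 : ℂ))⁻¹ ^ 2 = 1 / 2 := by
  rw [inv_pow, ← Complex.ofReal_pow, Real.sq_sqrt zero_le_two]; push_cast; ring

theorem singlet_expectation_kronecker (A B : Matrix (Fin 2) (Fin 2) ℂ) :
    star psiSinglet ⬝ᵥ ((A ⊗ₖ B) *ᵥ psiSinglet)
      = (A 0 0 * B 1 1 - A 0 1 * B 1 0 - A 1 0 * B 0 1 + A 1 1 * B 0 0) / 2 := by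
  simp only [dotProduct, Pi.star_apply, psiSinglet, Fin.isValue, one_div, Complex.ofReal_inv,
    RCLike.star_def, mulVec, kroneckerMap_apply, mul_ite, mul_neg, mul_zero, Fintype.sum_prod_type,
    Prod.mk.injEq, Fin.sum_univ_two, zero_ne_one, and_false, ↓reduceIte, and_true, one_ne_zero,
    zero_add, add_zero, map_zero, zero_mul, map_inv₀, Complex.conj_ofReal, map_neg, neg_mul]
  linear_combination
    (A 0 0 * B 1 1 - A 0 1 * B 1 0 - A 1 0 * B 0 1 + A 1 1 * B 0 0) * inv_sqrt_two_sq

theorem spinE_eq (a₁ a₂ a₃ : ℝ) :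
    spinE a₁ a₂ a₃ = !![(a₃ : ℂ), a₁ - a₂ * Complex.I; a₁ + a₂ * Complex.I, -a₃] := by
  ext i j
  fin_cases i <;> fin_cases j <;> simp [spinE, pauli1, pauli2, pauli3, mul_comm, sub_eq_add_neg]

theorem singlet_expectation_spinE (a₁ a₂ a₃ b₁ b₂ b₃ : ℝ) :
    star psiSinglet ⬝ᵥ ((spinE a₁ a₂ a₃ ⊗ₖ spinE b₁ b₂ b₃) *ᵥ psiSinglet)
      = ((-(a₁ * b₁ + a₂ * b₂ + a₃ * b₃) : ℝ) : ℂ) := by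
  simp only [singlet_expectation_kronecker, spinE_eq, of_apply, cons_val', cons_val_zero,
    cons_val_one, cons_val_fin_one, Complex.ofReal_neg, Complex.ofReal_add, Complex.ofReal_mul]
  linear_combination (a₂ * b₂ : ℂ) * Complex.I_sq

theorem spinE_add (a₁ a₂ a₃ b₁ b₂ b₃ : ℝ) :
    spinE a₁ a₂ a₃ + spinE b₁ b₂ b₃ = spinE (a₁ + b₁) (a₂ + b₂) (a₃ + b₃) := by
  simp only [spinE]; push_cast; module

theorem spinE_sub (a₁ a₂ a₃ b₁ b₂ b₃ : ℝ) :
    spinE a₁ a₂ a₃ - spinE b₁ b₂ b₃ = spinE (a₁ - b₁) (a₂ - b₂) (a₃ - b₃) := by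
  simp only [spinE]; push_cast; module

theorem norm_singlet_expectation_chsh
    (a₁ a₂ a₃ a'₁ a'₂ a'₃ b₁ b₂ b₃ b'₁ b'₂ b'₃ : ℝ) :
    ‖(star psiSinglet ⬝ᵥ
        ((spinE a₁ a₂ a₃ ⊗ₖ (spinE b₁ b₂ b₃ + spinE b'₁ b'₂ b'₃)
          + spinE a'₁ a'₂ a'₃ ⊗ₖ (spinE b₁ b₂ b₃ - spinE b'₁ b'₂ b'₃)) *ᵥ psiSinglet))‖
      = |a₁ * b₁ + a₂ * b₂ + a₃ * b₃ + (a₁ * b'₁ + a₂ * b'₂ + a₃ * b'₃)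
          + (a'₁ * b₁ + a'₂ * b₂ + a'₃ * b₃) - (a'₁ * b'₁ + a'₂ * b'₂ + a'₃ * b'₃)| := by
  rw [spinE_add, spinE_sub, add_mulVec, dotProduct_add, singlet_expectation_spinE,
    singlet_expectation_spinE, ← Complex.ofReal_add, Complex.norm_real, Real.norm_eq_abs,
    ← abs_neg]
  ring_nf

theorem exists_sq_eq_half_gt_half : ∃ c : ℝ, c ^ 2 = 1 / 2 ∧ 1 / 2 < c :=
  ⟨Real.sqrt 2 / 2, by rw [div_pow, Real.sq_sqrt zero_le_two]; norm_num,
    by linarith [Real.one_lt_sqrt_two]⟩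

/-- Quantum violation of CHSH: (i) for unit vectors `a, b`,
`⟨ψ, (E(a) ⊗ E(b)) ψ⟩ = −a·b`; (ii) there are unit vectors `a, a', b, b'` for which
the CHSH expectation has absolute value `|a·b + a·b' + a'·b − a'·b'| > 2`. -/
theorem chsh_quantum_violation :
    (∀ a₁ a₂ a₃ b₁ b₂ b₃ : ℝ,
      a₁ ^ 2 + a₂ ^ 2 + a₃ ^ 2 = 1 → b₁ ^ 2 + b₂ ^ 2 + b₃ ^ 2 = 1 →
      star psiSinglet ⬝ᵥ ((spinE a₁ a₂ a₃ ⊗ₖ spinE b₁ b₂ b₃) *ᵥ psiSinglet)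
        = ((-(a₁ * b₁ + a₂ * b₂ + a₃ * b₃) : ℝ) : ℂ)) ∧
    ∃ a₁ a₂ a₃ a'₁ a'₂ a'₃ b₁ b₂ b₃ b'₁ b'₂ b'₃ : ℝ,
      a₁ ^ 2 + a₂ ^ 2 + a₃ ^ 2 = 1 ∧ a'₁ ^ 2 + a'₂ ^ 2 + a'₃ ^ 2 = 1 ∧
      b₁ ^ 2 + b₂ ^ 2 + b₃ ^ 2 = 1 ∧ b'₁ ^ 2 + b'₂ ^ 2 + b'₃ ^ 2 = 1 ∧
      ‖(star psiSinglet ⬝ᵥ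
          ((spinE a₁ a₂ a₃ ⊗ₖ (spinE b₁ b₂ b₃ + spinE b'₁ b'₂ b'₃)
            + spinE a'₁ a'₂ a'₃ ⊗ₖ (spinE b₁ b₂ b₃ - spinE b'₁ b'₂ b'₃)) *ᵥ psiSinglet))‖
        = |a₁ * b₁ + a₂ * b₂ + a₃ * b₃ + (a₁ * b'₁ + a₂ * b'₂ + a₃ * b'₃)
            + (a'₁ * b₁ + a'₂ * b₂ + a'₃ * b₃) - (a'₁ * b'₁ + a'₂ * b'₂ + a'₃ * b'₃)| ∧
      (2 : ℝ) < |a₁ * b₁ + a₂ * b₂ + a₃ * b₃ + (a₁ * b'₁ + a₂ * b'₂ + a₃ * b'₃)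
            + (a'₁ * b₁ + a'₂ * b₂ + a'₃ * b₃) - (a'₁ * b'₁ + a'₂ * b'₂ + a'₃ * b'₃)| := by
  refine ⟨fun a₁ a₂ a₃ b₁ b₂ b₃ _ _ => singlet_expectation_spinE a₁ a₂ a₃ b₁ b₂ b₃, ?_⟩
  -- `a = e₁`, `a' = e₃`, `b, b' = (e₁ ± e₃)/√2`, so `a·b = a·b' = a'·b = -a'·b' = 1/√2`.
  obtain ⟨c, hc_sq, hc_gt⟩ := exists_sq_eq_half_gt_half
  refine ⟨1, 0, 0, 0, 0, 1, c, 0, c, c, 0, -c, by norm_num, by norm_num,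
    by linear_combination 2 * hc_sq, by linear_combination 2 * hc_sq,
    norm_singlet_expectation_chsh .., ?_⟩
  have hvalue : 1 * c + 0 * 0 + 0 * c + (1 * c + 0 * 0 + 0 * -c) + (0 * c + 0 * 0 + 1 * c)
      - (0 * c + 0 * 0 + 1 * -c) = 4 * c := by ring
  rw [hvalue, abs_of_pos (by linarith)]
  linarith

end
end

section
/- (Open-chain eigenvectors via the transcendental equation) Fix N ≥ 2, λ ∈ ℝ, and k ∈ ℝ satisfying sin(kN) = λ sin(k(N+1)). Let M ∈ M_N(ℝ) be the matrix with entries M_{jj} = 1 + λ² for 1 ≤ j ≤ N−1, M_{NN} = λ², M_{j,j+1} = M_{j+1,j} = −λ for 1 ≤ j ≤ N−1, and all other entries 0. Let Ψ ∈ ℝᴺ be the vector with components Ψ_l = sin(k l), l = 1,…,N. Then M Ψ = (1 + λ² − 2λ cos k) Ψ. -/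
open Matrix

noncomputable section

/-- The matrix `(1/4)(A+B)(A−B)` of the open transverse-field Ising chain:
diagonal `1 + λ²` except the last entry `λ²`, sub/super-diagonal `−λ`.
(Rows and columns are indexed by `Fin N`, site `l` being index `l−1`.) -/
def isingOpenM (N : ℕ) (lam : ℝ) : Matrix (Fin N) (Fin N) ℝ :=
  Matrix.of fun j j' =>
    (if j = j' then (if (j : ℕ) = N - 1 then lam ^ 2 else 1 + lam ^ 2) else 0)
    + (if (j' : ℕ) = (j : ℕ) + 1 then -lam else 0)
    + (if (j : ℕ) = (j' : ℕ) + 1 then -lam else 0)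

/-!
`Ψ_l = sin (k l)` obeys the bulk recurrence `sin (k (l - 1)) + sin (k (l + 1)) = 2 cos k sin (k l)`,
so each row of `M Ψ` is `(1 + λ² - 2 λ cos k) Ψ_l` once `Ψ` is extended to the neighbouring sites.
At site `0` the extension `sin 0 = 0` costs nothing; at site `N + 1` the last row misses the term
`-λ Ψ_{N+1}` but has `λ²` instead of `1 + λ²` on the diagonal, and the two discrepancies cancel
exactly when `sin (k N) = λ sin (k (N + 1))`.
-/

theorem Fin.sum_ite_val_eq {M : Type*} [AddCommMonoid M] {N : ℕ} (m : ℕ) (g : ℕ → M) :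
    ∑ i : Fin N, (if (i : ℕ) = m then g i else 0) = if m < N then g m else 0 := by
  rw [Fin.sum_univ_eq_sum_range (fun i => if i = m then g i else 0), Finset.sum_ite_eq']
  simp

theorem isingOpenM_mulVec_apply {N : ℕ} (lam : ℝ) (f : ℕ → ℝ) (hf : f 0 = 0) (j : Fin N) :
    (isingOpenM N lam *ᵥ fun l => f (l + 1)) j =
      (1 + lam ^ 2) * f (j + 1) - lam * (f j + f (j + 2))
        - if (j : ℕ) = N - 1 then f N - lam * f (N + 1) else 0 := by
  have hsub : ∑ i : Fin N, (if (j : ℕ) = i + 1 then -lam * f (i + 1) else 0) = -lam * f j := by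
    obtain ⟨_ | j', hj⟩ := j
    · simp [hf]
    · simpa [eq_comm (a := j'), show j' < N by omega] using
        Fin.sum_ite_val_eq (N := N) j' (fun i => -lam * f (i + 1))
  simp only [isingOpenM, mulVec, dotProduct, of_apply, add_mul, ite_mul, zero_mul,
    Finset.sum_add_distrib, Finset.sum_ite_eq, Finset.mem_univ, if_true, hsub,
    Fin.sum_ite_val_eq (j + 1) (fun i => -lam * f (i + 1))]
  obtain ⟨j, hj⟩ := j
  split_ifs with hlast hnext
  · omega
  · subst hlast
    rw [show N - 1 + 1 = N by omega, show N - 1 + 2 = N + 1 by omega]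
    ring
  · ring
  · omega

theorem ising_open_eigenvector_general {N : ℕ} (lam k : ℝ)
    (hk : Real.sin (k * N) = lam * Real.sin (k * (N + 1))) :
    let Ψ : Fin N → ℝ := fun l => Real.sin (k * ((l : ℕ) + 1))
    isingOpenM N lam *ᵥ Ψ = (1 + lam ^ 2 - 2 * lam * Real.cos k) • Ψ := by
  intro Ψ
  have hΨ : Ψ = fun l : Fin N => Real.sin (k * (((l : ℕ) + 1 : ℕ) : ℝ)) := by
    funext l
    push_cast
    rfl
  have hboundary : Real.sin (k * N) - lam * Real.sin (k * ((N + 1 : ℕ) : ℝ)) = 0 := by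
    push_cast
    linarith
  ext j
  have hbulk : Real.sin (k * j) + Real.sin (k * ((j + 2 : ℕ) : ℝ))
      = 2 * Real.sin (k * ((j : ℕ) + 1)) * Real.cos k := by
    rw [Real.two_mul_sin_mul_cos]
    push_cast
    ring_nf
  rw [hΨ, isingOpenM_mulVec_apply lam (fun n : ℕ => Real.sin (k * n)) (by simp) j]
  simp only [hboundary, hbulk, ite_self, sub_zero, Pi.smul_apply, smul_eq_mul]
  push_cast
  ring

/-- Open-chain eigenvectors: if `sin(kN) = λ sin(k(N+1))`, then `Ψ_l = sin(k l)` is an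
eigenvector of `(1/4)(A+B)(A−B)` with eigenvalue `1 + λ² − 2λ cos k`. -/
theorem ising_open_eigenvector {N : ℕ} (hN : 2 ≤ N) (lam k : ℝ)
    (hk : Real.sin (k * N) = lam * Real.sin (k * (N + 1))) :
    let Ψ : Fin N → ℝ := fun l => Real.sin (k * ((l : ℕ) + 1))
    isingOpenM N lam *ᵥ Ψ = (1 + lam ^ 2 - 2 * lam * Real.cos k) • Ψ :=
  ising_open_eigenvector_general lam k hk

end
end

section
/- (Invariance of the Chern–Connes pairing with idempotents) Let A be an associative ℂ-algebra and let τ : A × A × A → ℂ be a trilinear map satisfying (cyclicity) τ(a₀, a₁, a₂) = τ(a₂, a₀, a₁) for all a₀, a₁, a₂ ∈ A, and (the Hochschild cocycle condition) τ(a₀a₁, a₂, a₃) − τ(a₀, a₁a₂, a₃) + τ(a₀, a₁, a₂a₃) − τ(a₃a₀, a₁, a₂) = 0 for all a₀, a₁, a₂, a₃ ∈ A. Then for every idempotent e ∈ A (e² = e) and every x ∈ A, τ(xe − ex, e, e) = 0. Consequently, if t ↦ e_t is a differentiable family of idempotents with ė_t = [x_t, e_t], then t ↦ τ(e_t, e_t,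 e_t) is constant. -/
/-!
Write `a = xe − ex`. Idempotency of `e` gives `eae = 0` and `a = ae + ea`, and the Hochschild
cocycle identity evaluated at `(ae, e, e, e)` and at `(a, e, e, e)` yields `τ(ae, e, e) = 0` and
`τ(ea, e, e) = τ(ae, e, e)`, whence `τ(a, e, e) = 0`. Along a family `ė_t = [x_t, e_t]` the
derivative of `τ(e_t, e_t, e_t)` is the sum of the three terms with `ė_t` in one slot; by
cyclicity each equals `τ([x_t, e_t], e_t, e_t) = 0`.
-/

theorem IsIdempotentElem.mul_commutator_mul_self {A : Type*} [NonUnitalRing A] {e : A}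
    (he : IsIdempotentElem e) (x : A) : e * (x * e - e * x) * e = 0 := by
  simp only [mul_sub, sub_mul, ← mul_assoc, he.eq]
  rw [mul_assoc (e * x), he.eq, sub_self]

theorem IsIdempotentElem.commutator_eq_add {A : Type*} [NonUnitalRing A] {e : A}
    (he : IsIdempotentElem e) (x : A) :
    x * e - e * x = (x * e - e * x) * e + e * (x * e - e * x) := by
  simp only [mul_sub, sub_mul, ← mul_assoc, he.eq]
  rw [mul_assoc x, he.eq]
  abel

theorem LinearMap.apply_commutator_idempotent_eq_zero {R A M : Type*} [CommSemiring R]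
    [NonUnitalRing A] [Module R A] [AddCommGroup M] [Module R M]
    (τ : A →ₗ[R] A →ₗ[R] A →ₗ[R] M)
    (hcoc : ∀ a₀ a₁ a₂ a₃ : A,
      τ (a₀ * a₁) a₂ a₃ - τ a₀ (a₁ * a₂) a₃ + τ a₀ a₁ (a₂ * a₃) - τ (a₃ * a₀) a₁ a₂ = 0)
    {e : A} (he : IsIdempotentElem e) (x : A) : τ (x * e - e * x) e e = 0 := by
  set a := x * e - e * x
  have hsplit : a = a * e + e * a := he.commutator_eq_add x
  have hae : τ (a * e) e e = 0 := by
    have h := hcoc (a * e) e e e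
    rwa [mul_assoc, he.eq, ← mul_assoc, he.mul_commutator_mul_self, map_zero,
      LinearMap.zero_apply, LinearMap.zero_apply, sub_zero, sub_add_cancel] at h
  have hea : τ (e * a) e e = τ (a * e) e e := by
    have h := hcoc a e e e
    rw [he.eq, sub_add_cancel, sub_eq_zero] at h
    exact h.symm
  rw [hsplit, map_add, LinearMap.add_apply, LinearMap.add_apply, hea, hae, add_zero]

section RestrictScalars

variable {𝕜 𝕜' E F G H : Type*} [NontriviallyNormedField 𝕜] [NontriviallyNormedField 𝕜']
  [NormedAlgebra 𝕜 𝕜']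
  [NormedAddCommGroup E] [NormedSpace 𝕜 E] [NormedSpace 𝕜' E] [IsScalarTower 𝕜 𝕜' E]
  [NormedAddCommGroup F] [NormedSpace 𝕜 F] [NormedSpace 𝕜' F] [IsScalarTower 𝕜 𝕜' F]
  [NormedAddCommGroup G] [NormedSpace 𝕜 G] [NormedSpace 𝕜' G] [IsScalarTower 𝕜 𝕜' G]
  [NormedAddCommGroup H] [NormedSpace 𝕜 H] [NormedSpace 𝕜' H] [IsScalarTower 𝕜 𝕜' H]
  {x : 𝕜}

theorem HasDerivAt.clm_apply_restrictScalars
    {c : 𝕜 → E →L[𝕜'] F} {c' : E →L[𝕜'] F} {u : 𝕜 → E} {u' : E}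
    (hc : HasDerivAt c c' x) (hu : HasDerivAt u u' x) :
    HasDerivAt (fun y => c y (u y)) (c' (u x) + c x u') x :=
  ((ContinuousLinearMap.restrictScalarsL 𝕜' E F 𝕜 𝕜).hasFDerivAt.comp_hasDerivAt x hc).clm_apply hu

theorem ContinuousLinearMap.hasDerivAt_of_trilinear
    (τ : E →L[𝕜'] F →L[𝕜'] G →L[𝕜'] H) {u : 𝕜 → E} {v : 𝕜 → F} {w : 𝕜 → G}
    {u' : E} {v' : F} {w' : G}
    (hu : HasDerivAt u u' x) (hv : HasDerivAt v v' x) (hw : HasDerivAt w w' x) :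
    HasDerivAt (fun y => τ (u y) (v y) (w y))
      (τ u' (v x) (w x) + τ (u x) v' (w x) + τ (u x) (v x) w') x := by
  have huv : HasDerivAt (fun y => τ (u y) (v y)) (τ (u x) v' + τ u' (v x)) x :=
    (τ.bilinearRestrictScalars 𝕜).hasDerivAt_of_bilinear (fun _ => hu) (fun _ => hv)
  convert huv.clm_apply_restrictScalars hw using 1
  simp only [add_apply]
  abel

end RestrictScalars

theorem cyclic_cocycle_idempotent_pairing_invariant_general
    {A : Type*} [NonUnitalNormedRing A] [NormedSpace ℂ A]
    (τ : A →L[ℂ] A →L[ℂ] A →L[ℂ] ℂ)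
    (hcyc : ∀ a₀ a₁ a₂ : A, τ a₀ a₁ a₂ = τ a₂ a₀ a₁)
    (hcoc : ∀ a₀ a₁ a₂ a₃ : A,
      τ (a₀ * a₁) a₂ a₃ - τ a₀ (a₁ * a₂) a₃ + τ a₀ a₁ (a₂ * a₃) - τ (a₃ * a₀) a₁ a₂ = 0) :
    (∀ e x : A, e * e = e → τ (x * e - e * x) e e = 0) ∧
      ∀ e x : ℝ → A, (∀ t, e t * e t = e t) →
        (∀ t, HasDerivAt e (x t * e t - e t * x t) t) →
        ∀ s t : ℝ, τ (e s) (e s) (e s) = τ (e t) (e t) (e t) := by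
  have hcomm : ∀ e x : A, e * e = e → τ (x * e - e * x) e e = 0 := fun e x he =>
    (τ.toLinearMap₁₂.compr₂ (ContinuousLinearMap.coeLM ℂ)).apply_commutator_idempotent_eq_zero
      hcoc he x
  refine ⟨hcomm, fun e x he hder s t => ?_⟩
  have hconst : ∀ r, HasDerivAt (fun r => τ (e r) (e r) (e r)) 0 r := fun r => by
    refine (τ.hasDerivAt_of_trilinear (hder r) (hder r) (hder r)).congr_deriv ?_
    rw [hcyc (e r) _ (e r), hcyc (e r) (e r), hcomm _ _ (he r), add_zero, add_zero]
  exact is_const_of_deriv_eq_zero (fun r => (hconst r).differentiableAt) (fun r => (hconst r).deriv)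
    s t

/-- Invariance of the Chern–Connes pairing with idempotents: if `τ` is a cyclic
2-cocycle on an associative ℂ-algebra `A` (cyclic and satisfying the Hochschild
cocycle condition), then `τ(xe − ex, e, e) = 0` for every idempotent `e` and every
`x`; consequently, for a differentiable family of idempotents `e_t` with
`ė_t = [x_t, e_t]`, the pairing `τ(e_t, e_t, e_t)` is constant in `t`. -/
theorem cyclic_cocycle_idempotent_pairing_invariant
    {A : Type*} [NonUnitalNormedRing A] [NormedSpace ℂ A]
    [SMulCommClass ℂ A A] [IsScalarTower ℂ A A]
    (τ : A →L[ℂ] A →L[ℂ] A →L[ℂ] ℂ)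
    (hcyc : ∀ a₀ a₁ a₂ : A, τ a₀ a₁ a₂ = τ a₂ a₀ a₁)
    (hcoc : ∀ a₀ a₁ a₂ a₃ : A,
      τ (a₀ * a₁) a₂ a₃ - τ a₀ (a₁ * a₂) a₃ + τ a₀ a₁ (a₂ * a₃) - τ (a₃ * a₀) a₁ a₂ = 0) :
    (∀ e x : A, e * e = e → τ (x * e - e * x) e e = 0) ∧
      ∀ e x : ℝ → A, (∀ t, e t * e t = e t) →
        (∀ t, HasDerivAt e (x t * e t - e t * x t) t) →
        ∀ s t : ℝ, τ (e s) (e s) (e s) = τ (e t) (e t) (e t) :=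
  cyclic_cocycle_idempotent_pairing_invariant_general τ hcyc hcoc
end
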